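/- arXiv:1807.11044 — 4 statements merged into one kernel-verified Lean document; each statement's English description precedes it below -/
import Mathlib

section
/- Let R be a commutative local ring and E a finite free R-module equipped with a symplectic form ⟨·,·⟩ : E × E → R (an alternating bilinear form such that e ↦ ⟨·, e⟩ is a bijection E → Hom_R(E,R)). Let F be a direct summand of E which is isotropic, i.e. F ⊆ F^⊥ where F^⊥ := {e ∈ E : ⟨f, e⟩ = 0 for all f ∈ F}. Then 2·rank(F) ≤ rank(E), and F = F^⊥ if and only if 2·rank(F) = rank(E). -/
/-!
Choose a complement `G` of `F`. Pairing with `F` is a surjection `E → F^*` with kernel `F^⊥`;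
since `F ⊆ F^⊥` it is still surjective on `G`. Over a local ring all the direct summands in
sight are free, so `rank G = rank F + rank (G ∩ F^⊥)`, i.e.
`rank E = 2 rank F + rank (G ∩ F^⊥)`. By the modular law `F^⊥ = F ⊕ (G ∩ F^⊥)`, so equality
holds exactly when `F = F^⊥`.
-/

open Module LinearMap

/-- The orthogonal `F^⊥` of a submodule `F` with respect to a bilinear form `B` on `E`. -/
def Bilin.perp {R E : Type*} [CommRing R] [AddCommGroup E] [Module R E]
    (B : E →ₗ[R] E →ₗ[R] R) (F : Submodule R E) :
    Submodule R E where
  carrier := {e | ∀ f ∈ F, B f e = 0}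
  add_mem' := by
    intro a b ha hb f hf
    simp [map_add, ha f hf, hb f hf]
  zero_mem' := by
    intro f hf
    simp
  smul_mem' := by
    intro c x hx f hf
    simp [map_smul, hx f hf]

theorem IsCompl.eq_iff_disjoint_of_le {α : Type*} [Lattice α] [BoundedOrder α]
    [IsModularLattice α] {a b c : α} (h : IsCompl a b) (hac : a ≤ c) : a = c ↔ Disjoint b c :=
  ⟨fun hc ↦ hc ▸ h.disjoint.symm,
    fun hbc ↦ (le_iff_eq_of_codisjoint_of_disjoint h.codisjoint hbc).mp hac⟩

section Ring

variable {R M N : Type*} [CommRing R] [AddCommGroup M] [Module R M] [AddCommGroup N] [Module R N]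

theorem LinearMap.nonempty_equiv_ker_prod_of_surjective [Projective R N] {f : M →ₗ[R] N}
    (hf : Function.Surjective f) : Nonempty (M ≃ₗ[R] ker f × N) := by
  obtain ⟨s, hs⟩ := f.exists_rightInverse_of_surjective (range_eq_top.mpr hf)
  exact ⟨((exact_subtype_ker_map f).splitSurjectiveEquiv (ker f).injective_subtype ⟨s, hs⟩).1⟩

theorem Submodule.surjective_dualMap_subtype_of_isCompl {F G : Submodule R M} (h : IsCompl F G) :
    Function.Surjective F.subtype.dualMap := fun ψ ↦
  ⟨ψ ∘ₗ F.projectionOnto G h, by ext x; simp [Submodule.projectionOnto_apply_left]⟩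

theorem LinearMap.surjective_domRestrict_of_isCompl {f : M →ₗ[R] N} (hf : Function.Surjective f)
    {F G : Submodule R M} (h : IsCompl F G) (hF : F ≤ ker f) :
    Function.Surjective (f.domRestrict G) := by
  intro y
  obtain ⟨x, rfl⟩ := hf y
  obtain ⟨a, ha, b, hb, rfl⟩ := Submodule.mem_sup.mp (h.sup_eq_top ▸ Submodule.mem_top : x ∈ F ⊔ G)
  exact ⟨⟨b, hb⟩, by simp [mem_ker.mp (hF ha)]⟩

end Ring

section LocalRing

variable {R M N P : Type*} [CommRing R] [IsLocalRing R] [AddCommGroup M] [Module R M]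
  [Module.Finite R M] [Module.Free R M] [AddCommGroup N] [Module R N] [AddCommGroup P] [Module R P]

theorem Module.free_and_finite_of_equiv_prod (e : M ≃ₗ[R] N × P) :
    Module.Free R N ∧ Module.Finite R N := by
  have hsplit : (fst R N P ∘ₗ e.toLinearMap) ∘ₗ (e.symm.toLinearMap ∘ₗ inl R N P) = .id := by
    ext; simp
  have : Module.Finite R N := .of_surjective _ (LinearMap.surjective_of_comp_eq_id _ _ hsplit)
  have : Module.Projective R N := .of_split _ _ hsplit
  have := Module.finitePresentation_of_projective R N
  exact ⟨Module.free_of_flat_of_isLocalRing, inferInstance⟩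

theorem Module.finrank_eq_add_of_equiv_prod (e : M ≃ₗ[R] N × P) :
    finrank R M = finrank R N + finrank R P := by
  obtain ⟨_, _⟩ := free_and_finite_of_equiv_prod e
  obtain ⟨_, _⟩ := free_and_finite_of_equiv_prod (e.trans (LinearEquiv.prodComm R N P))
  rw [e.finrank_eq, finrank_prod]

theorem LinearMap.finrank_eq_add_finrank_ker_of_surjective [Projective R N] {f : M →ₗ[R] N}
    (hf : Function.Surjective f) : finrank R M = finrank R (ker f) + finrank R N :=
  finrank_eq_add_of_equiv_prod (nonempty_equiv_ker_prod_of_surjective hf).some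

theorem LinearMap.injective_iff_finrank_eq_of_surjective [Projective R N] {f : M →ₗ[R] N}
    (hf : Function.Surjective f) : Function.Injective f ↔ finrank R M = finrank R N := by
  have e := (nonempty_equiv_ker_prod_of_surjective hf).some
  obtain ⟨_, _⟩ := free_and_finite_of_equiv_prod e
  rw [finrank_eq_add_of_equiv_prod e, add_eq_right, finrank_eq_zero_iff_of_free,
    Submodule.subsingleton_iff_eq_bot, ker_eq_bot]

end LocalRing

namespace Bilin

variable {R E : Type*} [CommRing R] [AddCommGroup E] [Module R E] (B : E →ₗ[R] E →ₗ[R] R)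

theorem perp_eq_ker (F : Submodule R E) : perp B F = ker (F.subtype.dualMap ∘ₗ B.flip) :=
  Submodule.ext fun _ ↦ ⟨fun h ↦ LinearMap.ext fun f ↦ h f f.2, fun h f hf ↦ congr($h ⟨f, hf⟩)⟩

end Bilin

theorem statement1_general {R E : Type*} [CommRing R] [IsLocalRing R]
    [AddCommGroup E] [Module R E] [Module.Finite R E] [Module.Free R E]
    (B : E →ₗ[R] E →ₗ[R] R)
    (hperf : Function.Bijective ⇑B.flip)
    (F : Submodule R E) (hF : ∃ G : Submodule R E, IsCompl F G)
    (hiso : F ≤ Bilin.perp B F) :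
    2 * Module.finrank R F ≤ Module.finrank R E ∧
    (F = Bilin.perp B F ↔ 2 * Module.finrank R F = Module.finrank R E) := by
  obtain ⟨G, hG⟩ := hF
  have hE : finrank R E = finrank R F + finrank R G :=
    finrank_eq_add_of_equiv_prod (Submodule.prodEquivOfIsCompl F G hG).symm
  obtain ⟨_, _⟩ := free_and_finite_of_equiv_prod (Submodule.prodEquivOfIsCompl F G hG).symm
  obtain ⟨_, _⟩ := free_and_finite_of_equiv_prod (Submodule.prodEquivOfIsCompl G F hG.symm).symm
  have hdual : finrank R (Dual R F) = finrank R F :=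
    (Free.chooseBasis R F).toDualEquiv.finrank_eq.symm
  set g := F.subtype.dualMap ∘ₗ B.flip
  have hperp : Bilin.perp B F = ker g := Bilin.perp_eq_ker B F
  have hg : Function.Surjective g :=
    (Submodule.surjective_dualMap_subtype_of_isCompl hG).comp hperf.2
  have hgG : Function.Surjective (g.domRestrict G) :=
    surjective_domRestrict_of_isCompl hg hG (hperp ▸ hiso)
  have hG_rank : finrank R G = finrank R (ker (g.domRestrict G)) + finrank R F := by
    rw [finrank_eq_add_finrank_ker_of_surjective hgG, hdual]
  refine ⟨by omega, ?_⟩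
  rw [hG.eq_iff_disjoint_of_le hiso, hperp, ← injective_domRestrict_iff,
    injective_iff_finrank_eq_of_surjective hgG, hdual]
  omega

/-- over a local ring, an isotropic direct summand `F` of a finite free
symplectic module `E` satisfies `2 rank F ≤ rank E`, with equality iff `F` is Lagrangian. -/
theorem statement1 {R E : Type*} [CommRing R] [IsLocalRing R]
    [AddCommGroup E] [Module R E] [Module.Finite R E] [Module.Free R E]
    (B : E →ₗ[R] E →ₗ[R] R)
    (halt : ∀ e : E, B e e = 0)
    (hperf : Function.Bijective ⇑B.flip)
    (F : Submodule R E) (hF : ∃ G : Submodule R E, IsCompl F G)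
    (hiso : F ≤ Bilin.perp B F) :
    2 * Module.finrank R F ≤ Module.finrank R E ∧
    (F = Bilin.perp B F ↔ 2 * Module.finrank R F = Module.finrank R E) :=
  statement1_general B hperf F hF hiso
end

section
/- Let R be a commutative local ring and E a finite free R-module equipped with a perfect alternating R-bilinear form ⟨·,·⟩ : E × E → R (i.e. ⟨e,e⟩ = 0 for all e and the map E → Hom_R(E,R), e ↦ ⟨·,e⟩, is bijective). Then there exists a Lagrangian direct summand of E, that is, a direct summand F of E with F = F^⊥ := {e ∈ E : ⟨f,e⟩ = 0 for all f ∈ F}. -/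
open Submodule Module

namespace Bilin

variable {R E : Type*} [CommRing R] [AddCommGroup E] [Module R E] {B : E →ₗ[R] E →ₗ[R] R}

theorem perp_anti {F F' : Submodule R E} (h : F ≤ F') : perp B F' ≤ perp B F :=
  orthogonalBilin_le h

theorem le_perp_perp (hB : B.IsRefl) (F : Submodule R E) : F ≤ perp B (perp B F) :=
  le_orthogonalBilin_orthogonalBilin hB

theorem perp_sup (F₁ F₂ : Submodule R E) : perp B (F₁ ⊔ F₂) = perp B F₁ ⊓ perp B F₂ := by
  ext x
  refine ⟨fun hx ↦ ⟨perp_anti le_sup_left hx, perp_anti le_sup_right hx⟩, ?_⟩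
  rintro ⟨hx₁, hx₂⟩ f hf
  obtain ⟨f₁, hf₁, f₂, hf₂, rfl⟩ := mem_sup.mp hf
  simp [hx₁ f₁ hf₁, hx₂ f₂ hf₂]

theorem mem_perp_span {s : Set E} {x : E} : x ∈ perp B (span R s) ↔ ∀ y ∈ s, B y x = 0 := by
  refine ⟨fun hx y hy ↦ hx y (subset_span hy), fun hx f hf ↦ ?_⟩
  induction hf using span_induction with
  | mem y hy => exact hx y hy
  | zero => simp
  | add y z _ _ hy hz => simp [hy, hz]
  | smul a y _ hy => simp [hy]

theorem bijective_flip_domRestrict₁₂ {H W : Submodule R E} (hHW : IsCompl H W)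
    (hW : W ≤ perp B H) (hH : H ≤ perp B W) (hB : Function.Bijective B.flip) :
    Function.Bijective (B.domRestrict₁₂ W W).flip := by
  have hsplit (x : E) : ∃ h ∈ H, ∃ w ∈ W, h + w = x := mem_sup.mp (hHW.sup_eq_top ▸ mem_top)
  refine ⟨(injective_iff_map_eq_zero _).mpr fun w hw ↦ Subtype.ext (hB.1 ?_), fun ψ ↦ ?_⟩
  · refine LinearMap.ext fun x ↦ ?_
    obtain ⟨h, hh, w', hw', rfl⟩ := hsplit x
    have hw'w : B w' w = 0 := by
      simpa [LinearMap.domRestrict₁₂_apply] using LinearMap.congr_fun hw ⟨w', hw'⟩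
    simp [hW w.2 h hh, hw'w]
  · obtain ⟨y, hy⟩ := hB.2 (ψ ∘ₗ W.projectionOnto H hHW.symm)
    obtain ⟨h, hh, w, hw, rfl⟩ := hsplit y
    refine ⟨⟨w, hw⟩, LinearMap.ext fun x ↦ ?_⟩
    simpa [LinearMap.domRestrict₁₂_apply, hH hh x x.2] using LinearMap.congr_fun hy x

/-- `F` is a Lagrangian of `B` restricted to `H`, and `G` is a complement of `F` in `H`. -/
structure IsLagrangianIn (B : E →ₗ[R] E →ₗ[R] R) (H F G : Submodule R E) : Prop where
  inf_eq_bot : F ⊓ G = ⊥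
  sup_eq : F ⊔ G = H
  inf_perp_eq : H ⊓ perp B F = F

namespace IsLagrangianIn

variable {H F G : Submodule R E}

theorem left_le (h : IsLagrangianIn B H F G) : F ≤ H := h.sup_eq ▸ le_sup_left

theorem right_le (h : IsLagrangianIn B H F G) : G ≤ H := h.sup_eq ▸ le_sup_right

theorem le_perp (h : IsLagrangianIn B H F G) : F ≤ perp B F := fun _ hx ↦ (h.inf_perp_eq.ge hx).2

theorem isCompl (h : IsLagrangianIn B ⊤ F G) : IsCompl F G :=
  ⟨disjoint_iff.mpr h.inf_eq_bot, codisjoint_iff.mpr h.sup_eq⟩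

theorem eq_perp (h : IsLagrangianIn B ⊤ F G) : F = perp B F := by
  simpa using h.inf_perp_eq.symm

theorem sup {K F' G' : Submodule R E} (h : IsLagrangianIn B H F G)
    (h' : IsLagrangianIn B K F' G') (hHK : Disjoint H K) (hK : K ≤ perp B H)
    (hH : H ≤ perp B K) : IsLagrangianIn B (H ⊔ K) (F ⊔ F') (G ⊔ G') where
  inf_eq_bot := by
    rw [← disjoint_iff, disjoint_def]
    intro x hF hG
    obtain ⟨f, hf, f', hf', rfl⟩ := mem_sup.mp hF
    obtain ⟨g, hg, g', hg', hfg⟩ := mem_sup.mp hG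
    have hdiff : f - g = g' - f' := by rw [sub_eq_sub_iff_add_eq_add, ← hfg, add_comm]
    have hfg₀ : f - g = 0 := disjoint_def.mp hHK _
      (sub_mem (h.left_le hf) (h.right_le hg)) (hdiff ▸ sub_mem (h'.right_le hg') (h'.left_le hf'))
    rw [hfg₀, eq_comm, sub_eq_zero] at hdiff
    rw [sub_eq_zero] at hfg₀
    have hf₀ : f = 0 := (mem_bot R).mp (h.inf_eq_bot ▸ mem_inf.mpr ⟨hf, hfg₀ ▸ hg⟩)
    have hf'₀ : f' = 0 := (mem_bot R).mp (h'.inf_eq_bot ▸ mem_inf.mpr ⟨hf', hdiff ▸ hg'⟩)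
    rw [hf₀, hf'₀, add_zero]
  sup_eq := by rw [sup_sup_sup_comm, h.sup_eq, h'.sup_eq]
  inf_perp_eq := by
    refine le_antisymm ?_ (le_inf (sup_le_sup h.left_le h'.left_le) ?_)
    · rintro _ ⟨hx, hxF⟩
      obtain ⟨y, hy, z, hz, rfl⟩ := mem_sup.mp hx
      rw [perp_sup] at hxF
      -- the `K`-part is orthogonal to `F ≤ H`, and the `H`-part to `F' ≤ K`
      have hyF : y ∈ perp B F :=
        (Submodule.add_mem_iff_left _ (perp_anti h.left_le (hK hz))).mp hxF.1
      have hzF' : z ∈ perp B F' :=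
        (Submodule.add_mem_iff_right _ (perp_anti h'.left_le (hH hy))).mp hxF.2
      exact add_mem_sup (h.inf_perp_eq ▸ ⟨hy, hyF⟩) (h'.inf_perp_eq ▸ ⟨hz, hzF'⟩)
    · rw [perp_sup]
      exact sup_le (le_inf h.le_perp ((h.left_le.trans hH).trans (perp_anti h'.left_le)))
        (le_inf ((h'.left_le.trans hK).trans (perp_anti h.left_le)) h'.le_perp)

theorem map_subtype {W : Submodule R E} {L L' : Submodule R W} (hLL' : IsCompl L L')
    (hL : L = perp (B.domRestrict₁₂ W W) L) :
    IsLagrangianIn B W (L.map W.subtype) (L'.map W.subtype) where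
  inf_eq_bot := by rw [← map_inf _ W.injective_subtype, hLL'.inf_eq_bot, Submodule.map_bot]
  sup_eq := by rw [← Submodule.map_sup, hLL'.sup_eq_top, map_subtype_top]
  inf_perp_eq := by
    ext x
    refine ⟨fun ⟨hxW, hx⟩ ↦ ⟨⟨x, hxW⟩, hL.ge fun l hl ↦ hx l ⟨l, hl, rfl⟩, rfl⟩, ?_⟩
    rintro ⟨w, hw, rfl⟩
    exact ⟨w.2, by rintro _ ⟨l, hl, rfl⟩; exact hL.le hw l hl⟩

end IsLagrangianIn

theorem exists_apply_eq_one [Module.Free R E] [Nontrivial E] (hB : Function.Surjective B.flip) :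
    ∃ e f : E, B e f = 1 := by
  let b := Module.Free.chooseBasis R E
  obtain ⟨i⟩ := b.index_nonempty
  obtain ⟨f, hf⟩ := hB (b.coord i)
  exact ⟨b i, f, by rw [← LinearMap.flip_apply, hf]; simp⟩

section Hyperbolic

variable (hB : B.IsAlt) {e f : E} (hef : B e f = 1)
include hB hef

theorem apply_smul_add_smul (a c : R) :
    B e (a • e + c • f) = c ∧ B f (a • e + c • f) = -a := by
  have hfe : B f e = -1 := by rw [← hB.neg, hef]
  simp [hB.self_eq_zero, hef, hfe]

theorem isCompl_span_pair_perp : IsCompl (span R {e, f}) (perp B (span R {e, f})) := by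
  have mem_perp_pair (x : E) : x ∈ perp B (span R {e, f}) ↔ B e x = 0 ∧ B f x = 0 := by
    simp [mem_perp_span]
  constructor
  · rw [disjoint_def]
    rintro x hx hx'
    obtain ⟨a, c, rfl⟩ := mem_span_pair.mp hx
    obtain ⟨hc, ha⟩ := apply_smul_add_smul hB hef a c
    rw [(mem_perp_pair _).mp hx' |>.1] at hc
    rw [(mem_perp_pair _).mp hx' |>.2, eq_comm, neg_eq_zero] at ha
    rw [← hc, ha, zero_smul, zero_smul, add_zero]
  · rw [codisjoint_iff_exists_add_eq]
    intro x
    -- the hyperbolic projection of `x` onto the orthogonal of `span {e, f}`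
    refine ⟨B e x • f - B f x • e, x + B f x • e - B e x • f, ?_, ?_, by abel⟩
    · exact sub_mem (smul_mem _ _ (subset_span (by simp))) (smul_mem _ _ (subset_span (by simp)))
    · have hfe : B f e = -1 := by rw [← hB.neg, hef]
      rw [mem_perp_pair]
      constructor <;> simp [hB.self_eq_zero, hef, hfe]

theorem isLagrangianIn_span_pair : IsLagrangianIn B (span R {e, f}) (span R {e}) (span R {f}) where
  inf_eq_bot := by
    rw [← disjoint_iff, disjoint_def]
    intro x hxe hxf
    obtain ⟨c, rfl⟩ := mem_span_singleton.mp hxf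
    obtain ⟨a, hac⟩ := mem_span_singleton.mp hxe
    have hc : c = 0 := by simpa [hB.self_eq_zero, hef, eq_comm] using congrArg (B e) hac
    rw [hc, zero_smul]
  sup_eq := (span_insert e {f}).symm
  inf_perp_eq := by
    ext x
    simp only [mem_inf, mem_perp_span, Set.mem_singleton_iff, forall_eq]
    constructor
    · rintro ⟨hx, hex⟩
      obtain ⟨a, c, rfl⟩ := mem_span_pair.mp hx
      rw [(apply_smul_add_smul hB hef a c).1] at hex
      simp [hex, mem_span_singleton]
    · intro hx
      obtain ⟨a, rfl⟩ := mem_span_singleton.mp hx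
      exact ⟨span_mono (by simp) hx, by simpa using (apply_smul_add_smul hB hef a 0).1⟩

end Hyperbolic

end Bilin

section Complement

variable {R E : Type*} [CommRing R] [AddCommGroup E] [Module R E] [Module.Finite R E]
  {p q : Submodule R E}

theorem Submodule.finite_of_isCompl (h : IsCompl p q) : Module.Finite R p :=
  Module.Finite.of_surjective _ (projectionOnto_surjective h)

variable [IsLocalRing R] [Module.Free R E]

theorem Submodule.free_of_isCompl (h : IsCompl p q) : Module.Free R p :=
  have := finite_of_isCompl h
  have : Module.Projective R p := .of_split p.subtype _ (projectionOnto_comp_subtype h)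
  Module.free_of_flat_of_isLocalRing

theorem Submodule.finrank_lt_of_isCompl (h : IsCompl p q) [Nontrivial p] :
    finrank R q < finrank R E := by
  have := finite_of_isCompl h
  have := finite_of_isCompl h.symm
  have := free_of_isCompl h
  have := free_of_isCompl h.symm
  have hsum := (prodEquivOfIsCompl p q h).finrank_eq
  have hpos := (finrank_pos_iff_of_free R p).mpr ‹_›
  rw [finrank_prod] at hsum
  omega

end Complement

/-- a finite free module `E` over a local ring equipped with a perfect
alternating bilinear form admits a Lagrangian direct summand. -/
theorem statement2 {R E : Type*} [CommRing R] [IsLocalRing R]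
    [AddCommGroup E] [Module R E] [Module.Finite R E] [Module.Free R E]
    (B : E →ₗ[R] E →ₗ[R] R)
    (halt : ∀ e : E, B e e = 0)
    (hperf : Function.Bijective ⇑B.flip) :
    ∃ F : Submodule R E, (∃ G : Submodule R E, IsCompl F G) ∧ F = Bilin.perp B F := by
  induction hn : finrank R E using Nat.strong_induction_on generalizing E with
  | _ n ih =>
  rcases subsingleton_or_nontrivial E with hE | hE
  · exact ⟨⊥, ⟨⊤, isCompl_bot_top⟩, Subsingleton.elim _ _⟩
  obtain ⟨e, f, hef⟩ := Bilin.exists_apply_eq_one hperf.2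
  set H := span R {e, f}
  set W := Bilin.perp B H
  have hHW : IsCompl H W := Bilin.isCompl_span_pair_perp halt hef
  have hH : H ≤ Bilin.perp B W := Bilin.le_perp_perp (LinearMap.IsAlt.isRefl halt) H
  have : Nontrivial H := ⟨⟨e, subset_span (by simp)⟩, 0, fun he ↦ by simp_all⟩
  have := finite_of_isCompl hHW.symm
  have := free_of_isCompl hHW.symm
  obtain ⟨L, ⟨L', hLL'⟩, hL⟩ := ih _ (hn ▸ finrank_lt_of_isCompl hHW)
    (B.domRestrict₁₂ W W) (fun w ↦ halt w)
    (Bilin.bijective_flip_domRestrict₁₂ hHW le_rfl hH hperf) rfl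
  have hLag := (Bilin.isLagrangianIn_span_pair halt hef).sup (.map_subtype hLL' hL)
    hHW.disjoint le_rfl hH
  rw [hHW.sup_eq_top] at hLag
  exact ⟨_, ⟨_, hLag.isCompl⟩, hLag.eq_perp⟩
end

section
/- Let R be a commutative ring and E a finitely generated projective R-module equipped with a symplectic form ⟨·,·⟩ (an alternating bilinear form such that e ↦ ⟨·,e⟩ is a bijection E → Hom_R(E,R)). Let E₀ be a Lagrangian direct summand of E (i.e. E₀ = E₀^⊥) and let (e₁, …, eₙ) be a basis of E₀ as an R-module. Then there exist elements f₁, …, fₙ ∈ E such that (e₁, …, eₙ, f₁, …, fₙ) is a basis of E and is symplectic, i.e. ⟨eᵢ, eⱼ⟩ = ⟨fᵢ, fⱼ⟩ = 0 and ⟨eᵢ, fⱼ⟩ = δᵢⱼ for all 1 ≤ i, j ≤ n. -/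
/-
Pairing the basis `(eᵢ)` of `E₀` against a complement gives functionals `eᵢ*` on `E`, and
perfectness of the form lifts them to vectors `gⱼ` with `⟨eᵢ, gⱼ⟩ = δᵢⱼ`. Since `E₀` is isotropic,
replacing `gⱼ` by `gⱼ - ∑ₖ λⱼₖ eₖ` keeps these pairings, and the strictly upper triangular choice
`λⱼₖ = ⟨gⱼ, gₖ⟩` (for `j < k`) makes the new family isotropic because the form is alternating. The
resulting family `(e, f)` is independent by pairing with the `eᵢ`, and spans `E` because
`x - ∑ⱼ ⟨eⱼ, x⟩ fⱼ` lies in `E₀^⊥ = E₀`.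
-/

open Submodule

namespace Bilin

variable {R E : Type*} [CommRing R] [AddCommGroup E] [Module R E] {B : E →ₗ[R] E →ₗ[R] R}
  {ι : Type*}

theorem mem_perp_span_range_iff {e : ι → E} {x : E} :
    x ∈ perp B (span R (Set.range e)) ↔ ∀ i, B (e i) x = 0 := by
  refine ⟨fun hx i => hx _ (subset_span ⟨i, rfl⟩), fun hx y hy => ?_⟩
  induction hy using span_induction with
  | mem y hy => obtain ⟨i, rfl⟩ := hy; exact hx i
  | zero => simp
  | add y z _ _ hy hz => simp [hy, hz]
  | smul c y _ hy => simp [hy]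

variable [DecidableEq ι]

theorem exists_dual_family_of_isCompl (hB : Function.Surjective B.flip) {E₀ G : Submodule R E}
    (hG : IsCompl E₀ G) (b : Module.Basis ι R E₀) :
    ∃ g : ι → E, ∀ i j, B (b i) (g j) = if i = j then 1 else 0 := by
  choose g hg using fun j => hB ((b.coord j).comp (E₀.projectionOnto G hG))
  refine ⟨g, fun i j => ?_⟩
  rw [← LinearMap.flip_apply B, hg j]
  simp [projectionOnto_apply_left, Finsupp.single_apply]

theorem exists_isotropic_dual_family [Fintype ι] [LinearOrder ι] (hB : B.IsAlt) {e g : ι → E}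
    (he : ∀ i j, B (e i) (e j) = 0) (hg : ∀ i j, B (e i) (g j) = if i = j then 1 else 0) :
    ∃ f : ι → E, (∀ i j, B (e i) (f j) = if i = j then 1 else 0) ∧ ∀ i j, B (f i) (f j) = 0 := by
  set c : ι → ι → R := fun j k => if j < k then B (g j) (g k) else 0
  set f : ι → E := fun j => g j - ∑ k, c j k • e k
  have hef : ∀ i j, B (e i) (f j) = if i = j then 1 else 0 := by
    intro i j
    simp [f, he, hg]
  have hge : ∀ i k, B (g i) (e k) = -(if k = i then 1 else 0) := by
    intro i k
    rw [← hB.neg, hg]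
  have hgf : ∀ i j, B (g i) (f j) = B (g i) (g j) + c j i := by
    intro i j
    simp [f, hge]
  have hff : ∀ i j, B (f i) (f j) = B (g i) (g j) + c j i - c i j := by
    intro i j
    rw [← hgf]
    simp [f, hef]
  refine ⟨f, hef, fun i j => ?_⟩
  rw [hff]
  rcases lt_trichotomy i j with h | rfl | h
  · simp [c, h, h.not_gt]
  · simpa using hB (g i)
  · simp [c, h, h.not_gt, ← hB.neg (g j) (g i)]


theorem linearIndependent_sumElim_of_pairing [Fintype ι] {e f : ι → E}
    (he : LinearIndependent R e) (hiso : ∀ i j, B (e i) (e j) = 0)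
    (hef : ∀ i j, B (e i) (f j) = if i = j then 1 else 0) :
    LinearIndependent R (Sum.elim e f) := by
  rw [Fintype.linearIndependent_iff]
  intro a ha
  simp only [Fintype.sum_sum_type, Sum.elim_inl, Sum.elim_inr] at ha
  have hf : ∀ k, a (Sum.inr k) = 0 := fun k => by
    simpa [hiso, hef] using congrArg (B (e k)) ha
  have he' : ∀ k, a (Sum.inl k) = 0 :=
    Fintype.linearIndependent_iff.mp he _ (by simpa [hf] using ha)
  rintro (k | k)
  exacts [he' k, hf k]

theorem span_sumElim_eq_top_of_pairing [Fintype ι] {e f : ι → E}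
    (hmax : ∀ x, (∀ j, B (e j) x = 0) → x ∈ span R (Set.range e))
    (hef : ∀ i j, B (e i) (f j) = if i = j then 1 else 0) :
    span R (Set.range (Sum.elim e f)) = ⊤ := by
  refine eq_top_iff'.2 fun x => ?_
  have hx : x - ∑ j, B (e j) x • f j ∈ span R (Set.range e) := hmax _ fun k => by simp [hef]
  rw [Set.Sum.elim_range, span_union]
  exact mem_sup.2 ⟨_, hx, _, sum_mem fun j _ => smul_mem _ _ (subset_span ⟨j, rfl⟩),
    sub_add_cancel _ _⟩

end Bilin

theorem statement3_general {R E : Type*} [CommRing R]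
    [AddCommGroup E] [Module R E]
    (B : E →ₗ[R] E →ₗ[R] R)
    (halt : ∀ e : E, B e e = 0)
    (hperf : Function.Bijective ⇑B.flip)
    (E₀ : Submodule R E) (hcompl : ∃ G : Submodule R E, IsCompl E₀ G)
    (hlag : E₀ = Bilin.perp B E₀)
    {n : ℕ} (b : Module.Basis (Fin n) R E₀) :
    ∃ f : Fin n → E, ∃ c : Module.Basis (Fin n ⊕ Fin n) R E,
      (∀ i, c (Sum.inl i) = (b i : E)) ∧ (∀ i, c (Sum.inr i) = f i) ∧
      (∀ i j, B (b i : E) (b j : E) = 0) ∧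
      (∀ i j, B (f i) (f j) = 0) ∧
      (∀ i j, B (b i : E) (f j) = if i = j then 1 else 0) := by
  obtain ⟨G, hG⟩ := hcompl
  set e : Fin n → E := E₀.subtype ∘ b
  have hspan : span R (Set.range e) = E₀ := by
    rw [Set.range_comp, ← map_span, b.span_eq, Submodule.map_top, range_subtype]
  have hiso : ∀ i j, B (e i) (e j) = 0 := fun i j => hlag.le (b j).2 _ (b i).2
  have hmax : ∀ x, (∀ j, B (e j) x = 0) → x ∈ span R (Set.range e) := fun x hx => by
    rw [hspan, hlag, ← hspan]
    exact Bilin.mem_perp_span_range_iff.2 hx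
  obtain ⟨g, hg⟩ := Bilin.exists_dual_family_of_isCompl hperf.2 hG b
  obtain ⟨f, hef, hff⟩ := Bilin.exists_isotropic_dual_family halt hiso hg
  let c := Module.Basis.mk (Bilin.linearIndependent_sumElim_of_pairing
    (b.linearIndependent.map' _ E₀.ker_subtype) hiso hef)
    (Bilin.span_sumElim_eq_top_of_pairing hmax hef).ge
  exact ⟨f, c, fun i => Module.Basis.mk_apply .., fun i => Module.Basis.mk_apply .., hiso, hff, hef⟩

/-- any basis of a Lagrangian direct summand `E₀` of a symplectic
finitely generated projective module `E` can be completed to a symplectic basis of `E`. -/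
theorem statement3 {R E : Type*} [CommRing R]
    [AddCommGroup E] [Module R E] [Module.Finite R E] [Module.Projective R E]
    (B : E →ₗ[R] E →ₗ[R] R)
    (halt : ∀ e : E, B e e = 0)
    (hperf : Function.Bijective ⇑B.flip)
    (E₀ : Submodule R E) (hcompl : ∃ G : Submodule R E, IsCompl E₀ G)
    (hlag : E₀ = Bilin.perp B E₀)
    {n : ℕ} (b : Module.Basis (Fin n) R E₀) :
    ∃ f : Fin n → E, ∃ c : Module.Basis (Fin n ⊕ Fin n) R E,
      (∀ i, c (Sum.inl i) = (b i : E)) ∧ (∀ i, c (Sum.inr i) = f i) ∧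
      (∀ i j, B (b i : E) (b j : E) = 0) ∧
      (∀ i j, B (f i) (f j) = 0) ∧
      (∀ i j, B (b i : E) (f j) = if i = j then 1 else 0) :=
  statement3_general B halt hperf E₀ hcompl hlag b
end

section
/- Let R be a commutative ring and E a finitely generated projective R-module equipped with a symplectic form ⟨·,·⟩ (an alternating bilinear form such that e ↦ ⟨·,e⟩ is a bijection E → Hom_R(E,R)). Let E₀ and F be Lagrangian direct summands of E with E = E₀ ⊕ F, and let (f₁, …, fₙ) be a basis of F as an R-module. Then there exists a unique n-tuple (e₁, …, eₙ) of elements of E₀ satisfying ⟨eᵢ, fⱼ⟩ = δᵢⱼ for all 1 ≤ i, j ≤ n; moreover this tuple is a basis of E₀ and (e₁, …, eₙ, f₁, …, fₙ) is a symplectic basis of E. -/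
open Module

namespace Bilin

variable {R E : Type*} [CommRing R] [AddCommGroup E] [Module R E] (B : E →ₗ[R] E →ₗ[R] R)

theorem mem_perp {F : Submodule R E} {e : E} : e ∈ perp B F ↔ ∀ f ∈ F, B f e = 0 :=
  Iff.rfl

variable {B}

theorem apply_eq_zero_of_le_perp {L : Submodule R E} (hL : L ≤ perp B L) {x y : E}
    (hx : x ∈ L) (hy : y ∈ L) : B x y = 0 :=
  (mem_perp B).1 (hL hy) x hx

variable (B)

def pairing (M N : Submodule R E) : M →ₗ[R] Dual R N :=
  B.compl₁₂ M.subtype N.subtype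

@[simp]
theorem pairing_apply (M N : Submodule R E) (x : M) (y : N) :
    pairing B M N x y = B x y :=
  rfl

variable {B}

theorem injective_pairing (hB : B.IsAlt) (hperf : Function.Injective B.flip)
    {M N : Submodule R E} (hM : M ≤ perp B M) (hMN : Codisjoint M N) :
    Function.Injective (pairing B M N) := by
  rw [injective_iff_map_eq_zero]
  intro x hx
  have hxN : ∀ y ∈ N, B y x = 0 := fun y hy => by
    rw [← hB.neg, ← pairing_apply B M N x ⟨y, hy⟩, hx, LinearMap.zero_apply, neg_zero]
  have hflip : B.flip x = 0 := by
    ext y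
    obtain ⟨y₀, y₁, hy₀, hy₁, rfl⟩ := Submodule.codisjoint_iff_exists_add_eq.mp hMN y
    simp [apply_eq_zero_of_le_perp hM hy₀ x.2, hxN y₁ hy₁]
  exact Subtype.ext (hperf (by rw [hflip, Submodule.coe_zero, map_zero]))

theorem surjective_pairing (hB : B.IsAlt) (hperf : Function.Surjective B.flip)
    {M N : Submodule R E} (hN : N ≤ perp B N) (hMN : IsCompl M N) :
    Function.Surjective (pairing B M N) := by
  intro φ
  obtain ⟨e, he⟩ := hperf (-(φ ∘ₗ N.projectionOnto M hMN.symm))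
  obtain ⟨e₀, e₁, he₀, he₁, rfl⟩ := Submodule.codisjoint_iff_exists_add_eq.mp hMN.codisjoint e
  refine ⟨⟨e₀, he₀⟩, LinearMap.ext fun y => ?_⟩
  have hy : B y (e₀ + e₁) = -φ y := by
    simpa using LinearMap.congr_fun he (y : E)
  rw [map_add, apply_eq_zero_of_le_perp hN y.2 he₁, add_zero] at hy
  rw [pairing_apply, ← hB.neg, hy, neg_neg]

end Bilin

theorem LinearEquiv.eq_symm_dualBasis_iff {R M N ι : Type*} [CommRing R] [AddCommGroup M]
    [Module R M] [AddCommGroup N] [Module R N] [Finite ι] [DecidableEq ι]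
    (Φ : M ≃ₗ[R] Dual R N) (f : Basis ι R N) (e : ι → M) :
    (∀ i j, Φ (e i) (f j) = if i = j then 1 else 0) ↔ e = fun i => Φ.symm (f.dualBasis i) := by
  simp only [funext_iff, LinearEquiv.eq_symm_apply]
  refine forall_congr' fun i => ⟨fun h => f.ext fun j => ?_, fun h j => ?_⟩ <;>
    simp only [h, f.dualBasis_apply_self, eq_comm]

theorem Submodule.exists_basis_sum_of_isCompl {R E ι κ : Type*} [Ring R] [AddCommGroup E]
    [Module R E] {p q : Submodule R E} (h : IsCompl p q) (b : Basis ι R p) (c : Basis κ R q) :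
    ∃ d : Basis (ι ⊕ κ) R E, (∀ i, d (.inl i) = b i) ∧ ∀ j, d (.inr j) = c j :=
  ⟨(b.prod c).map (prodEquivOfIsCompl p q h), fun i => by simp [coe_prodEquivOfIsCompl'],
    fun j => by simp [coe_prodEquivOfIsCompl']⟩

theorem statement4_general {R E : Type*} [CommRing R]
    [AddCommGroup E] [Module R E]
    (B : E →ₗ[R] E →ₗ[R] R)
    (halt : ∀ e : E, B e e = 0)
    (hperf : Function.Bijective ⇑B.flip)
    (E₀ F : Submodule R E)
    (hE₀ : E₀ = Bilin.perp B E₀) (hF : F = Bilin.perp B F)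
    (hcompl : IsCompl E₀ F)
    {n : ℕ} (f : Module.Basis (Fin n) R F) :
    (∃! e : Fin n → E₀,
      ∀ i j, B (e i : E) (f j : E) = if i = j then 1 else 0) ∧
    ∀ e : Fin n → E₀,
      (∀ i j, B (e i : E) (f j : E) = if i = j then 1 else 0) →
      (∃ be : Module.Basis (Fin n) R E₀, ∀ i, be i = e i) ∧
      ∃ c : Module.Basis (Fin n ⊕ Fin n) R E,
        (∀ i, c (Sum.inl i) = (e i : E)) ∧ (∀ i, c (Sum.inr i) = (f i : E)) ∧
        (∀ i j, B (e i : E) (e j : E) = 0) ∧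
        (∀ i j, B (f i : E) (f j : E) = 0) := by
  let Φ := LinearEquiv.ofBijective (Bilin.pairing B E₀ F)
    ⟨Bilin.injective_pairing halt hperf.1 hE₀.le hcompl.codisjoint,
      Bilin.surjective_pairing halt hperf.2 hF.le hcompl⟩
  have hdual := Φ.eq_symm_dualBasis_iff f
  refine ⟨⟨_, (hdual _).2 rfl, fun e he => (hdual e).1 he⟩, fun e he => ?_⟩
  obtain rfl := (hdual e).1 he
  let be := f.dualBasis.map Φ.symm
  obtain ⟨c, hcE₀, hcF⟩ := Submodule.exists_basis_sum_of_isCompl hcompl be f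
  exact ⟨⟨be, fun i => rfl⟩, c, fun i => by rw [hcE₀]; rfl, hcF,
    fun i j => Bilin.apply_eq_zero_of_le_perp hE₀.le (be i).2 (be j).2,
    fun i j => Bilin.apply_eq_zero_of_le_perp hF.le (f i).2 (f j).2⟩

/-- if `E₀` and `F` are complementary Lagrangian direct summands of a
symplectic finitely generated projective module `E`, and `(f₁, …, fₙ)` is a basis of
`F`, then there is a unique tuple `(e₁, …, eₙ)` in `E₀` with `⟨eᵢ, fⱼ⟩ = δᵢⱼ`;
moreover this tuple is a basis of `E₀` and together with `f` forms a symplectic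
basis of `E`. -/
theorem statement4 {R E : Type*} [CommRing R]
    [AddCommGroup E] [Module R E] [Module.Finite R E] [Module.Projective R E]
    (B : E →ₗ[R] E →ₗ[R] R)
    (halt : ∀ e : E, B e e = 0)
    (hperf : Function.Bijective ⇑B.flip)
    (E₀ F : Submodule R E)
    (hE₀ : E₀ = Bilin.perp B E₀) (hF : F = Bilin.perp B F)
    (hcompl : IsCompl E₀ F)
    {n : ℕ} (f : Module.Basis (Fin n) R F) :
    (∃! e : Fin n → E₀,
      ∀ i j, B (e i : E) (f j : E) = if i = j then 1 else 0) ∧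
    ∀ e : Fin n → E₀,
      (∀ i j, B (e i : E) (f j : E) = if i = j then 1 else 0) →
      (∃ be : Module.Basis (Fin n) R E₀, ∀ i, be i = e i) ∧
      ∃ c : Module.Basis (Fin n ⊕ Fin n) R E,
        (∀ i, c (Sum.inl i) = (e i : E)) ∧ (∀ i, c (Sum.inr i) = (f i : E)) ∧
        (∀ i j, B (e i : E) (e j : E) = 0) ∧
        (∀ i j, B (f i : E) (f j : E) = 0) :=
  statement4_general B halt hperf E₀ F hE₀ hF hcompl f
end
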